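/- arXiv:1011.1657 — 2 statements merged into one kernel-verified Lean document; each statement's English description precedes it below -/
import Mathlib

section
/- Let ħ, c, G, M, r be positive real numbers. Define the Bekenstein–Hawking entropy of a sphere of radius r as S_BH = c³·A/(4·G·ħ) with area A = 4π·r², and suppose the Unruh temperature T_U satisfies the holographic equipartition relation M·c² = 2·T_U·S_BH. Then the acceleration a defined by a = 2π·c·T_U/ħ equals G·M/r², Newton's gravitational acceleration. -/
/-! Solving the equipartition relation for the temperature gives `T_U = ħ·(G·M/r²)/(2π·c)`,
which is exactly the Unruh temperature `ħ·a/(2π·c)` of the Newtonian acceleration `G·M/r²`;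
inverting the Unruh relation then returns that acceleration. -/

open Real

theorem unruhTemperature_eq_of_equipartition {hbar c G M r T : ℝ}
    (hhbar : hbar ≠ 0) (hc : c ≠ 0) (hG : G ≠ 0) (hr : r ≠ 0)
    (hequi : M * c ^ 2 = 2 * T * (c ^ 3 * (4 * π * r ^ 2) / (4 * G * hbar))) :
    T = hbar * (G * M / r ^ 2) / (2 * π * c) := by
  have hpi : π ≠ 0 := pi_ne_zero
  field_simp at hequi ⊢
  linear_combination -hequi

theorem unruhAcceleration_of_unruhTemperature {hbar c : ℝ} (hhbar : hbar ≠ 0) (hc : c ≠ 0)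
    (g : ℝ) : 2 * π * c * (hbar * g / (2 * π * c)) / hbar = g := by
  have hpi : π ≠ 0 := pi_ne_zero
  field_simp

theorem newton_acceleration_holographic_general (hbar c G M r : ℝ)
    (hhbar : 0 < hbar) (hc : 0 < c) (hG : 0 < G) (hr : 0 < r)
    (A S_BH T_U a : ℝ)
    (hA : A = 4 * Real.pi * r ^ 2)
    (hS : S_BH = c ^ 3 * A / (4 * G * hbar))
    (hequi : M * c ^ 2 = 2 * T_U * S_BH)
    (ha : a = 2 * Real.pi * c * T_U / hbar) :
    a = G * M / r ^ 2 := by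
  subst hA hS
  rw [ha, unruhTemperature_eq_of_equipartition hhbar.ne' hc.ne' hG.ne' hr.ne' hequi]
  exact unruhAcceleration_of_unruhTemperature hhbar.ne' hc.ne' _

/-- Newton's gravitational acceleration from holographic equipartition:
if `M·c² = 2·T_U·S_BH` with `S_BH = c³·A/(4·G·hbar)`, `A = 4π·r²`, then the
acceleration `a = 2π·c·T_U/hbar` equals `G·M/r²`. -/
theorem newton_acceleration_holographic (hbar c G M r : ℝ)
    (hhbar : 0 < hbar) (hc : 0 < c) (hG : 0 < G) (hM : 0 < M) (hr : 0 < r)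
    (A S_BH T_U a : ℝ)
    (hA : A = 4 * Real.pi * r ^ 2)
    (hS : S_BH = c ^ 3 * A / (4 * G * hbar))
    (hequi : M * c ^ 2 = 2 * T_U * S_BH)
    (ha : a = 2 * Real.pi * c * T_U / hbar) :
    a = G * M / r ^ 2 :=
  newton_acceleration_holographic_general hbar c G M r hhbar hc hG hr A S_BH T_U a hA hS hequi ha
end

section
/- Let ħ, c, G, M, m, r, Δx be positive real numbers. Suppose the Unruh temperature T_U satisfies M·c² = 2·T_U·S_BH with S_BH = c³·(4π·r²)/(4·G·ħ), and suppose the horizon entropy change of a test particle of mass m at distance Δx is ΔS = 2π·c·m·Δx/ħ. Then the entropic force F = T_U·ΔS/Δx equals G·M·m/r², Newton's law of universal gravitation. -/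
/-!
Holographic equipartition fixes the screen temperature at `T_U = G·ħ·M / (2π·c·r²)`, which is
the Unruh temperature `ħ·a / (2π·c)` of the Newtonian acceleration `a = G·M / r²`. In
`F = T_U·ΔS/Δx` the displacement `Δx` cancels, leaving `F = 2π·c·m·T_U / ħ = m·a`.
-/

open Real

theorem unruhTemperature_of_holographic_equipartition {hbar c G M r T : ℝ}
    (hhbar : hbar ≠ 0) (hc : c ≠ 0) (hG : G ≠ 0) (hr : r ≠ 0)
    (hequi : M * c ^ 2 = 2 * T * (c ^ 3 * (4 * π * r ^ 2) / (4 * G * hbar))) :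
    T = G * hbar * M / (2 * π * c * r ^ 2) := by
  rw [eq_div_iff (by positivity)]
  linear_combination (norm := (field_simp; ring)) (-(G * hbar) / c ^ 2) * hequi

theorem entropicForce_eq {hbar c m Δx T : ℝ} (hhbar : hbar ≠ 0) (hΔx : Δx ≠ 0) :
    T * (2 * π * c * m * Δx / hbar) / Δx = 2 * π * c * m * T / hbar := by
  field_simp

theorem newton_gravity_entropic_general (hbar c G M m r Δx : ℝ)
    (hhbar : 0 < hbar) (hc : 0 < c) (hG : 0 < G)
    (hr : 0 < r) (hΔx : 0 < Δx)
    (S_BH T_U ΔS F : ℝ)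
    (hS : S_BH = c ^ 3 * (4 * Real.pi * r ^ 2) / (4 * G * hbar))
    (hequi : M * c ^ 2 = 2 * T_U * S_BH)
    (hΔS : ΔS = 2 * Real.pi * c * m * Δx / hbar)
    (hF : F = T_U * ΔS / Δx) :
    F = G * M * m / r ^ 2 := by
  subst hS
  have hT := unruhTemperature_of_holographic_equipartition hhbar.ne' hc.ne' hG.ne' hr.ne' hequi
  rw [hF, hΔS, entropicForce_eq hhbar.ne' hΔx.ne', hT]
  field_simp

/-- Newton's law of universal gravitation from information loss: with
`M·c² = 2·T_U·S_BH`, `S_BH = c³·(4π·r²)/(4·G·hbar)`, and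
`ΔS = 2π·c·m·Δx/hbar`, the entropic force `F = T_U·ΔS/Δx` equals `G·M·m/r²`. -/
theorem newton_gravity_entropic (hbar c G M m r Δx : ℝ)
    (hhbar : 0 < hbar) (hc : 0 < c) (hG : 0 < G) (hM : 0 < M) (hm : 0 < m)
    (hr : 0 < r) (hΔx : 0 < Δx)
    (S_BH T_U ΔS F : ℝ)
    (hS : S_BH = c ^ 3 * (4 * Real.pi * r ^ 2) / (4 * G * hbar))
    (hequi : M * c ^ 2 = 2 * T_U * S_BH)
    (hΔS : ΔS = 2 * Real.pi * c * m * Δx / hbar)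
    (hF : F = T_U * ΔS / Δx) :
    F = G * M * m / r ^ 2 :=
  newton_gravity_entropic_general hbar c G M m r Δx hhbar hc hG hr hΔx S_BH T_U ΔS F hS hequi hΔS hF
end
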